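/- Let C = [[1 + m², m],[m, 1]] over ℤ for a positive integer m, and define L_{m,k} by L_{m,0}=2, L_{m,1}=m, L_{m,k+2}=m·L_{m,k+1}+L_{m,k}. Then for all n ≥ 1, |det(C^n − I)| = L_{m,2n} − 2 and |det(C^n + I)| = L_{m,2n} + 2. -/

import Mathlib

/-!
`C` has determinant `1` and trace `L_{m,2}`, so by Cayley–Hamilton the traces of its powers
satisfy the recurrence `t_{n+2} = L_{m,2} t_{n+1} - t_n`, which the even-indexed terms
`L_{m,2n}` satisfy as well; hence `tr C^n = L_{m,2n}`. For a `2 × 2` matrix `A`,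
`det (A ∓ 1) = det A ∓ tr A + 1`, and `L_{m,2n} ≥ 2` fixes the signs.
-/

def mLucas (m : ℕ) : ℕ → ℤ
  | 0 => 2
  | 1 => m
  | k + 2 => m * mLucas m (k + 1) + mLucas m k

namespace Matrix

variable {R : Type*} [CommRing R]

theorem sq_fin_two (A : Matrix (Fin 2) (Fin 2) R) : A ^ 2 = A.trace • A - A.det • 1 := by
  ext i j
  fin_cases i <;> fin_cases j <;>
    simp [sq, mul_apply, trace_fin_two, det_fin_two] <;> ring

theorem trace_pow_add_two_fin_two (A : Matrix (Fin 2) (Fin 2) R) (n : ℕ) :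
    (A ^ (n + 2)).trace = A.trace * (A ^ (n + 1)).trace - A.det * (A ^ n).trace := by
  rw [pow_add, sq_fin_two, mul_sub, mul_smul_comm, mul_smul_comm, mul_one, ← pow_succ,
    trace_sub, trace_smul, trace_smul, smul_eq_mul, smul_eq_mul]

theorem det_sub_one_fin_two (A : Matrix (Fin 2) (Fin 2) R) :
    (A - 1).det = A.det - A.trace + 1 := by
  simp only [det_fin_two, trace_fin_two, sub_apply, one_apply_eq,
    one_apply_ne zero_ne_one, one_apply_ne one_ne_zero]
  ring

theorem det_add_one_fin_two (A : Matrix (Fin 2) (Fin 2) R) :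
    (A + 1).det = A.det + A.trace + 1 := by
  simp only [det_fin_two, trace_fin_two, add_apply, one_apply_eq,
    one_apply_ne zero_ne_one, one_apply_ne one_ne_zero]
  ring

end Matrix

namespace mLucas

theorem nonneg (m : ℕ) : ∀ k, 0 ≤ mLucas m k
  | 0 => by simp [mLucas]
  | 1 => by simp [mLucas]
  | k + 2 => by
    have := nonneg m (k + 1)
    have := nonneg m k
    simp only [mLucas]
    positivity

theorem two_le_two_mul (m : ℕ) : ∀ n, 2 ≤ mLucas m (2 * n)
  | 0 => by simp [mLucas]
  | n + 1 => by
    have h := two_le_two_mul m n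
    have := nonneg m (2 * n + 1)
    rw [Nat.mul_succ, mLucas]
    nlinarith [Int.natCast_nonneg m]

theorem two_mul_add_two (m n : ℕ) :
    mLucas m (2 * (n + 2)) =
      ((m : ℤ) ^ 2 + 2) * mLucas m (2 * (n + 1)) - mLucas m (2 * n) := by
  rw [show 2 * (n + 2) = 2 * n + 1 + 3 by ring, show 2 * (n + 1) = 2 * n + 2 by ring]
  simp only [mLucas]
  ring

end mLucas

def lucasMatrix (m : ℕ) : Matrix (Fin 2) (Fin 2) ℤ := !![1 + (m : ℤ) ^ 2, (m : ℤ); (m : ℤ), 1]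

theorem lucasMatrix_det (m : ℕ) : (lucasMatrix m).det = 1 := by
  rw [lucasMatrix, Matrix.det_fin_two_of]
  ring

theorem lucasMatrix_trace (m : ℕ) : (lucasMatrix m).trace = (m : ℤ) ^ 2 + 2 := by
  rw [lucasMatrix, Matrix.trace_fin_two_of]
  ring

theorem trace_lucasMatrix_pow (m : ℕ) : ∀ n, (lucasMatrix m ^ n).trace = mLucas m (2 * n)
  | 0 => by simp [mLucas]
  | 1 => by
    rw [pow_one, lucasMatrix_trace, show 2 * 1 = 0 + 2 from rfl, mLucas, mLucas, mLucas]
    ring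
  | n + 2 => by
    rw [Matrix.trace_pow_add_two_fin_two, trace_lucasMatrix_pow m (n + 1),
      trace_lucasMatrix_pow m n, lucasMatrix_det, lucasMatrix_trace, mLucas.two_mul_add_two,
      one_mul]

theorem stmt_14_general (m : ℕ) (n : ℕ) :
    let C : Matrix (Fin 2) (Fin 2) ℤ := !![1 + (m : ℤ) ^ 2, (m : ℤ); (m : ℤ), 1]
    |(C ^ n - 1).det| = mLucas m (2 * n) - 2 ∧
      |(C ^ n + 1).det| = mLucas m (2 * n) + 2 := by
  show |(lucasMatrix m ^ n - 1).det| = _ ∧ |(lucasMatrix m ^ n + 1).det| = _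
  have hdet : (lucasMatrix m ^ n).det = 1 := by rw [Matrix.det_pow, lucasMatrix_det, one_pow]
  have hL := mLucas.two_le_two_mul m n
  rw [Matrix.det_sub_one_fin_two, Matrix.det_add_one_fin_two, hdet, trace_lucasMatrix_pow]
  constructor
  · rw [abs_of_nonpos (by linarith)]; ring
  · rw [abs_of_nonneg (by linarith)]; ring

theorem stmt_14 (m : ℕ) (hm : 0 < m) (n : ℕ) (hn : 1 ≤ n) :
    let C : Matrix (Fin 2) (Fin 2) ℤ := !![1 + (m : ℤ) ^ 2, (m : ℤ); (m : ℤ), 1]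
    |(C ^ n - 1).det| = mLucas m (2 * n) - 2 ∧
      |(C ^ n + 1).det| = mLucas m (2 * n) + 2 :=
  stmt_14_general m n
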